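/- arXiv:2509.02883 — 2 statements merged into one kernel-verified Lean document; each statement's English description precedes it below -/
import Mathlib

section
/- In the free group F on generators e_1, …, e_k, consider the quotient (the free Milnor group) by the normal subgroup generated by all commutators [e_i, w^{-1} e_i w] for 1 ≤ i ≤ k and all words w. In this quotient, for every generator e_i, every element w, and every integer a ≥ 1, the identity [e_i^a, w] = [e_i, w]^a holds. -/
open scoped commutatorElement

/-- The relators of the free Milnor group on `k` generators: each generator
commutes with all of its conjugates. -/
def milnorRels (k : ℕ) : Set (FreeGroup (Fin k)) :=
  {x | ∃ (i : Fin k) (w : FreeGroup (Fin k)),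
    x = ⁅FreeGroup.of i, w⁻¹ * FreeGroup.of i * w⁆}

/-- The free Milnor group: the quotient of the free group on `e_1, …, e_k` by the
normal closure of the commutators `[e_i, w⁻¹ e_i w]`. -/
abbrev FreeMilnorGroup (k : ℕ) := PresentedGroup (milnorRels k)

/- `⁅g, h⁆ = g * (h g⁻¹ h⁻¹)` and `⁅g ^ n, h⁆ = g ^ n * (h g⁻¹ h⁻¹) ^ n`, so the identity is
`(x y) ^ n = x ^ n y ^ n` for the commuting pair `x = g`, `y = h g⁻¹ h⁻¹`. -/
theorem commutatorElement_pow_left_of_commute {G : Type*} [Group G] {g h : G}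
    (hg : Commute g (h * g⁻¹ * h⁻¹)) (n : ℕ) : ⁅g ^ n, h⁆ = ⁅g, h⁆ ^ n := by
  have hpow : ⁅g ^ n, h⁆ = g ^ n * (h * g⁻¹ * h⁻¹) ^ n := by
    rw [conj_pow, inv_pow, commutatorElement_def]; simp only [mul_assoc]
  rw [hpow, ← hg.mul_pow, commutatorElement_def]; simp only [mul_assoc]

namespace FreeMilnorGroup

theorem of_commute_conj (k : ℕ) (i : Fin k) (g : FreeMilnorGroup k) :
    Commute (PresentedGroup.of (rels := milnorRels k) i)
      (g⁻¹ * PresentedGroup.of (rels := milnorRels k) i * g) := by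
  obtain ⟨w, rfl⟩ := PresentedGroup.mk_surjective (milnorRels k) g
  rw [← commutatorElement_eq_one_iff_commute]
  exact PresentedGroup.one_of_mem ⟨i, w, rfl⟩

theorem of_commute_conj_inv (k : ℕ) (i : Fin k) (g : FreeMilnorGroup k) :
    Commute (PresentedGroup.of (rels := milnorRels k) i)
      (g * (PresentedGroup.of (rels := milnorRels k) i)⁻¹ * g⁻¹) := by
  simpa [mul_assoc] using (of_commute_conj k i g⁻¹).inv_right

end FreeMilnorGroup

theorem FreeMilnorGroup.commutator_pow_general (k : ℕ) (i : Fin k)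
    (w : FreeMilnorGroup k) (a : ℕ) :
    ⁅(PresentedGroup.of (rels := milnorRels k) i) ^ a, w⁆ =
      ⁅PresentedGroup.of (rels := milnorRels k) i, w⁆ ^ a :=
  commutatorElement_pow_left_of_commute (of_commute_conj_inv k i w) a

/-- **Power identity in the free Milnor group.**
In the free Milnor group, `[e_i^a, w] = [e_i, w]^a` for every generator `e_i`,
every element `w`, and every integer `a ≥ 1`. -/
theorem FreeMilnorGroup.commutator_pow (k : ℕ) (i : Fin k)
    (w : FreeMilnorGroup k) (a : ℕ) (ha : 1 ≤ a) :
    ⁅(PresentedGroup.of (rels := milnorRels k) i) ^ a, w⁆ =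
      ⁅PresentedGroup.of (rels := milnorRels k) i, w⁆ ^ a :=
  FreeMilnorGroup.commutator_pow_general k i w a
end

section
/- Let X be a simplicial complex with M simplices of dimension q and N simplices of dimension q−1. Then every simplicial q-coboundary b (with real coefficients) on X can be written as b = δc for a (q−1)-cochain c with ‖c‖_∞ ≤ min{M,N} · (q+1)^(min{M,N}−1) · ‖b‖_∞. -/
/-! If a linear system `A x = b` with an integer matrix is solvable, then it has a solution
supported on linearly independent columns, and on those columns it is determined by a
nonsingular square submatrix `M` of size `s ≤ min (#rows) (#columns)`. By Cramer's rule
`x = adj(M) b / det M`, where `|det M| ≥ 1` by integrality and each cofactor is at most the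
product of the `ℓ¹`-norms of `s - 1` rows of `M`. The coboundary map from `(q-1)`-cochains to
`q`-cochains is such a matrix, with `q + 1` entries `±1` in each row. -/

/-- The simplicial coboundary operator (with real coefficients) on an ordered
simplicial complex: for a cochain `c` on `(q-1)`-dimensional simplices and a
`q`-simplex `σ` (a finite set of `q+1` vertices), `(δc)(σ) = Σ_{v ∈ σ} (−1)^{ind(v)}
c(σ \ v)`, where `ind(v)` is the position of `v` in the ordering of `σ`. -/
noncomputable def simplicialCoboundary {V : Type*} [LinearOrder V]
    (c : Finset V → ℝ) (σ : Finset V) : ℝ :=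
  ∑ v ∈ σ, (-1 : ℝ) ^ ((σ.filter fun w => w < v).card) * c (σ.erase v)

open Finset Function

namespace Matrix

section OrderedRing

variable {n R : Type*} [Fintype n] [DecidableEq n] [CommRing R] [LinearOrder R]
  [IsStrictOrderedRing R]

theorem abs_det_le_prod_sum_abs (M : Matrix n n R) : |M.det| ≤ ∏ i, ∑ j, |M i j| := by
  let coeEmb : Equiv.Perm n ↪ (n → n) := ⟨(⇑), DFunLike.coe_injective⟩
  rw [← det_transpose, det_apply, Fintype.prod_sum]
  calc |∑ σ : Equiv.Perm n, Equiv.Perm.sign σ • ∏ i, Mᵀ (σ i) i|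
      ≤ ∑ σ : Equiv.Perm n, ∏ i, |M i (σ i)| := by
        refine (abs_sum_le_sum_abs _ _).trans_eq (sum_congr rfl fun σ _ => ?_)
        rcases Int.units_eq_one_or (Equiv.Perm.sign σ) with h | h <;> simp [h, abs_prod]
    _ = ∑ f ∈ univ.map coeEmb, ∏ i, |M i (f i)| :=
        (sum_map univ coeEmb fun f => ∏ i, |M i (f i)|).symm
    _ ≤ ∑ f : n → n, ∏ i, |M i (f i)| :=
        sum_le_univ_sum_of_nonneg fun f => prod_nonneg fun i _ => abs_nonneg _

theorem abs_adjugate_apply_le {M : Matrix n n R} {k : R} (hM : ∀ i, ∑ j, |M i j| ≤ k)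
    (i j : n) : |M.adjugate i j| ≤ k ^ (Fintype.card n - 1) := by
  rw [adjugate_apply]
  refine (abs_det_le_prod_sum_abs _).trans ?_
  rw [← mul_prod_erase univ _ (mem_univ j)]
  have hrow : ∑ c, |updateRow M j (Pi.single i 1) j c| = 1 := by
    simp [Pi.single_apply, apply_ite]
  calc (∑ c, |updateRow M j (Pi.single i 1) j c|) *
        ∏ r ∈ univ.erase j, ∑ c, |updateRow M j (Pi.single i 1) r c|
      ≤ 1 * ∏ _r ∈ univ.erase j, k := by
        rw [hrow]
        gcongr with r hr
        rw [updateRow_ne (ne_of_mem_erase hr)]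
        exact hM r
    _ = k ^ (Fintype.card n - 1) := by
        rw [one_mul, prod_const, card_erase_of_mem (mem_univ j), card_univ]

theorem abs_le_of_mulVec_eq {M : Matrix n n R} (hdet : 1 ≤ |M.det|) {k : R}
    (hM : ∀ i, ∑ j, |M i j| ≤ k) {y b : n → R} {B : R} (hb : ∀ i, |b i| ≤ B)
    (hMy : M *ᵥ y = b) (j : n) : |y j| ≤ Fintype.card n * k ^ (Fintype.card n - 1) * B := by
  have hk : 0 ≤ k := (sum_nonneg fun c _ => abs_nonneg (M j c)).trans (hM j)
  have hcramer : M.det • y = M.adjugate *ᵥ b := by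
    rw [← hMy, mulVec_mulVec, adjugate_mul, smul_mulVec, one_mulVec]
  calc |y j| ≤ |M.det| * |y j| := le_mul_of_one_le_left (abs_nonneg _) hdet
    _ = |∑ i, M.adjugate j i * b i| := by
        rw [← abs_mul, ← smul_eq_mul, ← Pi.smul_apply, hcramer]
        rfl
    _ ≤ ∑ i, |M.adjugate j i| * |b i| := by
        simpa only [abs_mul] using abs_sum_le_sum_abs (fun i => M.adjugate j i * b i) univ
    _ ≤ ∑ _i : n, k ^ (Fintype.card n - 1) * B := by
        refine sum_le_sum fun i _ => mul_le_mul (abs_adjugate_apply_le hM j i) (hb i)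
          (abs_nonneg _) (pow_nonneg hk _)
    _ = Fintype.card n * k ^ (Fintype.card n - 1) * B := by
        rw [sum_const, card_univ, nsmul_eq_mul, mul_assoc]

end OrderedRing

theorem mulVec_extend_zero {ι κ m R : Type*} [Fintype κ] [Fintype m]
    [NonUnitalNonAssocSemiring R] (A : Matrix ι κ R) {g : m → κ} (hg : Injective g) (y : m → R) :
    A *ᵥ extend g y 0 = A.submatrix id g *ᵥ y := by
  ext i
  simp only [mulVec, dotProduct, submatrix_apply, id]
  rw [← sum_subset (subset_univ (univ.map ⟨g, hg⟩)), sum_map]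
  · simp [hg.extend_apply]
  · intro j _ hj
    rw [extend_apply' _ _ _ (by simpa using hj)]
    simp

section Field

variable {ι κ m K : Type*} [Field K]

theorem exists_submatrix_det_ne_zero_of_linearIndependent_col [Fintype ι] [Fintype m]
    [DecidableEq m] (N : Matrix ι m K) (hN : LinearIndependent K N.col) :
    ∃ f : m → ι, Injective f ∧ (N.submatrix f id).det ≠ 0 := by
  obtain ⟨ι', f', hf', hspan, hli⟩ := exists_linearIndependent' K N.row
  have : Finite ι' := Finite.of_injective f' hf'
  cases nonempty_fintype ι'
  have hcard : Fintype.card m = Fintype.card ι' := by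
    rw [← finrank_span_eq_card hli, hspan, ← rank_eq_finrank_span_row, ← rank_transpose,
      ← hN.rank_matrix]
  let e := Fintype.equivOfCardEq hcard
  refine ⟨f' ∘ e, hf'.comp e.injective, ?_⟩
  have hrows : LinearIndependent K (N.submatrix (f' ∘ e) id).row := hli.comp e e.injective
  exact ((isUnit_iff_isUnit_det _).mp (linearIndependent_rows_iff_isUnit.mp hrows)).ne_zero

theorem mem_range_mulVec_iff [Fintype κ] {A : Matrix ι κ K} {b : ι → K} :
    b ∈ Set.range A.mulVec ↔ b ∈ Submodule.span K (Set.range A.col) := by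
  rw [← range_mulVecLin, LinearMap.mem_range]
  rfl

theorem exists_submatrix_det_ne_zero_of_mem_range_mulVec [Fintype ι] [Fintype κ]
    (A : Matrix ι κ K) {b : ι → K} (hb : b ∈ Set.range A.mulVec) :
    ∃ (s : ℕ) (f : Fin s → ι) (g : Fin s → κ), Injective f ∧ Injective g ∧
      (A.submatrix f g).det ≠ 0 ∧ b ∈ Set.range (A.submatrix id g).mulVec := by
  obtain ⟨κ', g', hg', hspan, hli⟩ := exists_linearIndependent' K A.col
  have : Finite κ' := Finite.of_injective g' hg'
  cases nonempty_fintype κ'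
  let e := (Fintype.equivFin κ').symm
  have hcols : LinearIndependent K (A.submatrix id (g' ∘ e)).col := hli.comp e e.injective
  obtain ⟨f, hf, hdet⟩ := exists_submatrix_det_ne_zero_of_linearIndependent_col _ hcols
  refine ⟨_, f, g' ∘ e, hf, hg'.comp e.injective, hdet, ?_⟩
  rw [mem_range_mulVec_iff] at hb ⊢
  have hcol : (A.submatrix id (g' ∘ e)).col = A.col ∘ g' ∘ e := rfl
  rwa [hcol, ← comp_assoc, e.surjective.range_comp, hspan]

end Field

theorem exists_mulVec_eq_and_abs_le {ι κ : Type*} [Fintype ι] [Fintype κ] (A : Matrix ι κ ℤ)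
    {k : ℕ} (hk : 1 ≤ k) (hA : ∀ i, ∑ j, |A i j| ≤ k) {b : ι → ℝ} {B : ℝ}
    (hB : ∀ i, |b i| ≤ B) (hb : b ∈ Set.range (A.map (Int.cast : ℤ → ℝ)).mulVec) :
    ∃ x, A.map (Int.cast : ℤ → ℝ) *ᵥ x = b ∧ ∀ j, |x j| ≤
      min (Fintype.card ι) (Fintype.card κ) *
        (k : ℝ) ^ (min (Fintype.card ι) (Fintype.card κ) - 1) * B := by
  set m := min (Fintype.card ι) (Fintype.card κ)
  obtain ⟨s, f, g, hf, hg, hdet, y, hy⟩ :=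
    exists_submatrix_det_ne_zero_of_mem_range_mulVec (A.map (Int.cast : ℤ → ℝ)) hb
  refine ⟨extend g y 0, by rw [mulVec_extend_zero _ hg, hy], fun j => ?_⟩
  by_cases hj : ∃ c, g c = j
  · obtain ⟨c, rfl⟩ := hj
    rw [hg.extend_apply]
    set M := (A.map (Int.cast : ℤ → ℝ)).submatrix f g
    have hMy : M *ᵥ y = b ∘ f := funext fun r => congrFun hy (f r)
    have hMdet : 1 ≤ |M.det| := by
      have hcast : M.det = ((A.submatrix f g).det : ℝ) := by
        rw [Int.cast_det]
        rfl
      rw [hcast] at hdet ⊢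
      exact_mod_cast Int.one_le_abs (by exact_mod_cast hdet)
    have hMrow : ∀ r, ∑ c, |M r c| ≤ k := by
      intro r
      calc ∑ c, |M r c| = ∑ j ∈ univ.map ⟨g, hg⟩, |(A (f r) j : ℝ)| := by simp [M]
        _ ≤ ∑ j, |(A (f r) j : ℝ)| :=
            sum_le_univ_sum_of_nonneg fun j => abs_nonneg _
        _ ≤ k := by exact_mod_cast hA (f r)
    have hsm : s ≤ m := le_min
      (by simpa using Fintype.card_le_of_injective f hf)
      (by simpa using Fintype.card_le_of_injective g hg)
    calc |y c| ≤ s * (k : ℝ) ^ (s - 1) * B := by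
          simpa using abs_le_of_mulVec_eq hMdet hMrow (fun r => hB (f r)) hMy c
      _ ≤ m * (k : ℝ) ^ (m - 1) * B := by
          have hB0 : 0 ≤ B := (abs_nonneg _).trans (hB (f c))
          gcongr
          exact_mod_cast hk
  · rw [extend_apply' _ _ _ hj, Pi.zero_apply, abs_zero]
    rcases isEmpty_or_nonempty ι with _ | ⟨⟨i⟩⟩
    · simp [m]
    · have hB0 : 0 ≤ B := (abs_nonneg _).trans (hB i)
      positivity

end Matrix

section Coboundary

open Matrix

variable {V : Type*} [LinearOrder V]

def coboundaryMatrix (S T : Finset (Finset V)) : Matrix S T ℤ :=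
  of fun σ τ => ∑ v ∈ σ.1,
    if σ.1.erase v = τ.1 then (-1) ^ ((σ.1.filter fun w => w < v).card) else 0

theorem coboundaryMatrix_mulVec {S T : Finset (Finset V)}
    (hST : ∀ σ ∈ S, ∀ v ∈ σ, σ.erase v ∈ T) (c : Finset V → ℝ) (σ : S) :
    ((coboundaryMatrix S T).map (Int.cast : ℤ → ℝ) *ᵥ fun τ => c τ) σ =
      simplicialCoboundary c σ := by
  simp only [mulVec, dotProduct, map_apply, coboundaryMatrix, of_apply, Int.cast_sum, sum_mul,
    simplicialCoboundary]
  rw [sum_comm]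
  refine sum_congr rfl fun v hv => ?_
  rw [sum_coe_sort T fun τ => ((if σ.1.erase v = τ then _ else 0 : ℤ) : ℝ) * c τ]
  simp [hST σ σ.2 v hv]

theorem sum_abs_coboundaryMatrix_le (S T : Finset (Finset V)) (σ : S) :
    ∑ τ, |coboundaryMatrix S T σ τ| ≤ σ.1.card := by
  have hface (v : V) (ε : ℤ) (hε : |ε| = 1) :
      ∑ τ : T, |if σ.1.erase v = τ.1 then ε else 0| ≤ 1 := by
    rw [sum_coe_sort T fun τ => |if σ.1.erase v = τ then ε else 0|]
    simp only [apply_ite, hε, abs_zero, sum_ite_eq]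
    split_ifs <;> norm_num
  calc ∑ τ, |coboundaryMatrix S T σ τ|
      ≤ ∑ τ : T, ∑ v ∈ σ.1, |if σ.1.erase v = τ.1 then
          (-1 : ℤ) ^ ((σ.1.filter fun w => w < v).card) else 0| :=
        sum_le_sum fun τ _ => abs_sum_le_sum_abs _ _
    _ = ∑ v ∈ σ.1, ∑ τ : T, |if σ.1.erase v = τ.1 then
          (-1 : ℤ) ^ ((σ.1.filter fun w => w < v).card) else 0| := sum_comm
    _ ≤ ∑ _v ∈ σ.1, 1 := sum_le_sum fun v _ => hface v _ (by simp)
    _ = σ.1.card := by simp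

end Coboundary

theorem simplicial_coboundary_bounded_primitive_general
    {V : Type*} [LinearOrder V] (K : Finset (Finset V))
    (hK : ∀ s ∈ K, ∀ t ⊆ s, t ∈ K) (q : ℕ)
    (b : Finset V → ℝ) (B : ℝ)
    (hb : ∃ c' : Finset V → ℝ, ∀ σ ∈ K, σ.card = q + 1 →
      b σ = simplicialCoboundary c' σ)
    (hB : ∀ σ ∈ K, σ.card = q + 1 → |b σ| ≤ B) :
    ∃ c : Finset V → ℝ,
      (∀ σ ∈ K, σ.card = q + 1 → b σ = simplicialCoboundary c σ) ∧
      (∀ τ ∈ K, τ.card = q →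
        |c τ| ≤ (min ((K.filter fun s => s.card = q + 1).card)
                      ((K.filter fun s => s.card = q).card) : ℝ) *
                ((q : ℝ) + 1) ^ (min ((K.filter fun s => s.card = q + 1).card)
                      ((K.filter fun s => s.card = q).card) - 1) * B) := by
  set S := K.filter fun s => s.card = q + 1
  set T := K.filter fun s => s.card = q
  have hface : ∀ σ ∈ S, ∀ v ∈ σ, σ.erase v ∈ T := by
    intro σ hσ v hv
    obtain ⟨hσK, hσq⟩ := mem_filter.1 hσ
    refine mem_filter.2 ⟨hK σ hσK _ (erase_subset v σ), ?_⟩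
    rw [card_erase_of_mem hv, hσq, Nat.add_sub_cancel]
  have hrow (σ : S) : ∑ τ, |coboundaryMatrix S T σ τ| ≤ (q + 1 : ℕ) :=
    (sum_abs_coboundaryMatrix_le S T σ).trans_eq (by rw [(mem_filter.1 σ.2).2])
  have hsolv : (fun σ : S => b σ) ∈ Set.range ((coboundaryMatrix S T).map Int.cast).mulVec := by
    obtain ⟨c', hc'⟩ := hb
    refine ⟨fun τ => c' τ, funext fun σ => ?_⟩
    rw [coboundaryMatrix_mulVec hface]
    exact (hc' σ (mem_filter.1 σ.2).1 (mem_filter.1 σ.2).2).symm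
  obtain ⟨x, hx, hxB⟩ := Matrix.exists_mulVec_eq_and_abs_le _ (Nat.le_add_left 1 q) hrow
    (fun σ => hB σ (mem_filter.1 σ.2).1 (mem_filter.1 σ.2).2) hsolv
  let c : Finset V → ℝ := fun τ => if h : τ ∈ T then x ⟨τ, h⟩ else 0
  refine ⟨c, fun σ hσK hσq => ?_, fun τ hτK hτq => ?_⟩
  · have hσ := congrFun hx ⟨σ, mem_filter.2 ⟨hσK, hσq⟩⟩
    have hcx : (fun τ : T => c τ) = x := funext fun τ => dif_pos τ.2
    rwa [← hcx, coboundaryMatrix_mulVec hface, eq_comm] at hσ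
  · have hτ : τ ∈ T := mem_filter.2 ⟨hτK, hτq⟩
    simpa [c, hτ] using hxB ⟨τ, hτ⟩

/-- **Coisoperimetric inequality for simplicial cochains** (Corollary `cor:sIP`).
Let `X` be a simplicial complex with `M` simplices of dimension `q` and `N`
simplices of dimension `q−1`.  Every simplicial `q`-coboundary `b` with
`‖b‖_∞ ≤ B` is the coboundary of a `(q−1)`-cochain `c` with
`‖c‖_∞ ≤ min{M,N} · (q+1)^{min{M,N}−1} · B`.
(A `q`-simplex is a member of `K` of cardinality `q+1`.) -/
theorem simplicial_coboundary_bounded_primitive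
    {V : Type*} [LinearOrder V] (K : Finset (Finset V))
    (hK : ∀ s ∈ K, ∀ t ⊆ s, t ∈ K) (q : ℕ) (hq : 1 ≤ q)
    (b : Finset V → ℝ) (B : ℝ)
    (hb : ∃ c' : Finset V → ℝ, ∀ σ ∈ K, σ.card = q + 1 →
      b σ = simplicialCoboundary c' σ)
    (hB : ∀ σ ∈ K, σ.card = q + 1 → |b σ| ≤ B) :
    ∃ c : Finset V → ℝ,
      (∀ σ ∈ K, σ.card = q + 1 → b σ = simplicialCoboundary c σ) ∧
      (∀ τ ∈ K, τ.card = q →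
        |c τ| ≤ (min ((K.filter fun s => s.card = q + 1).card)
                      ((K.filter fun s => s.card = q).card) : ℝ) *
                ((q : ℝ) + 1) ^ (min ((K.filter fun s => s.card = q + 1).card)
                      ((K.filter fun s => s.card = q).card) - 1) * B) :=
  simplicial_coboundary_bounded_primitive_general K hK q b B hb hB
end
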